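/- An increasing homeomorphism of a compact interval with an even number of transverse fixed points is topologically conjugate to its inverse. -/

import Mathlib

/-!
Extend `f` by the identity to an order automorphism `e` of `ℝ`. A transverse fixed point is
isolated, so `e` has finitely many fixed points in `[l, r]`, and the direction of motion
(`x < e x` or `e x < x`) flips at each of them.

We build a decreasing bijection `h` of `[l, r]` with `h ∘ e = e⁻¹ ∘ h` (a reverser of `e`) by
induction on the number of fixed points, peeling off the two outer gaps `[l, p]` and `[q, r]`;
as that number is even, the induction ends with a single gap.
A reverser of `[p, q]` exchanges its ends and preserves the direction of motion, so together
with the flips at `p` and `q` the two outer gaps move in the same direction. Maps moving the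
points of two gaps in the same direction are conjugate (by transporting a fundamental domain
`[x₀, e x₀)`), and composing such a conjugacy with the reflection of a gap gives reversers
exchanging `[l, p]` and `[q, r]`; these glue with the reverser of `[p, q]`.
-/

open Set

/-- A fixed point which is attracting (for iterations of `f`). -/
def AttractingFix (f : ℝ → ℝ) (p : ℝ) : Prop :=
  f p = p ∧ ∃ η > 0, ∀ x ∈ Set.Ioo (p - η) (p + η),
    Filter.Tendsto (fun n => f^[n] x) Filter.atTop (nhds p)

/-- A fixed point which is repelling: nearby points eventually leave a
neighborhood of `p`. -/
def RepellingFix (f : ℝ → ℝ) (p : ℝ) : Prop :=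
  f p = p ∧ ∃ η > 0, ∀ x ∈ Set.Ioo (p - η) (p + η), x ≠ p →
    ∃ n, f^[n] x ∉ Set.Ioo (p - η) (p + η)

/-- A transverse fixed point: attracting or repelling. -/
def TransverseFix (f : ℝ → ℝ) (p : ℝ) : Prop :=
  AttractingFix f p ∨ RepellingFix f p

open Filter Topology Function

theorem mapsTo_Icc_of_apply_eq {e : ℝ ≃o ℝ} {a b : ℝ} (ha : e a = a) (hb : e b = b) :
    MapsTo e (Icc a b) (Icc a b) := fun _ hx => ⟨ha ▸ e.monotone hx.1, hb ▸ e.monotone hx.2⟩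

theorem bijOn_add_sub_Icc (a b : ℝ) : BijOn (fun x => a + b - x) (Icc a b) (Icc a b) :=
  have hmaps : MapsTo (fun x => a + b - x) (Icc a b) (Icc a b) := fun x hx =>
    ⟨by linarith [hx.2], by linarith [hx.1]⟩
  InvOn.bijOn ⟨fun _ _ => sub_sub_cancel _ _, fun _ _ => sub_sub_cancel _ _⟩ hmaps hmaps

theorem exists_orderIso_eqOn {f : ℝ → ℝ} {a b : ℝ} (hf : StrictMonoOn f (Icc a b))
    (hbij : BijOn f (Icc a b) (Icc a b)) : ∃ e : ℝ ≃o ℝ, EqOn e f (Icc a b) := by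
  classical
  set g := (Icc a b).piecewise f id
  have hmono : StrictMono g := by
    intro x y hxy
    by_cases hx : x ∈ Icc a b <;> by_cases hy : y ∈ Icc a b <;>
      simp only [g, piecewise_eq_of_mem, piecewise_eq_of_notMem, hx, hy, not_false_eq_true,
        id_eq]
    · exact hf hx hy hxy
    · exact (hbij.mapsTo hx).2.trans_lt (lt_of_not_ge fun h => hy ⟨hx.1.trans hxy.le, h⟩)
    · exact (lt_of_not_ge fun h => hx ⟨h, hxy.le.trans hy.2⟩).trans_le (hbij.mapsTo hy).1
    · exact hxy
  have hsurj : Surjective g := by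
    intro y
    by_cases hy : y ∈ Icc a b
    · obtain ⟨x, hx, rfl⟩ := hbij.surjOn hy
      exact ⟨x, piecewise_eq_of_mem _ _ _ hx⟩
    · exact ⟨y, piecewise_eq_of_notMem _ _ _ hy⟩
  exact ⟨hmono.orderIsoOfSurjective g hsurj, fun x hx => piecewise_eq_of_mem _ _ _ hx⟩

theorem StrictAntiOn.continuousOn_of_bijOn {h : ℝ → ℝ} {a b : ℝ}
    (hanti : StrictAntiOn h (Icc a b)) (hbij : BijOn h (Icc a b) (Icc a b)) :
    ContinuousOn h (Icc a b) := by
  have hrefl := bijOn_add_sub_Icc a b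
  obtain ⟨e, he⟩ := exists_orderIso_eqOn (f := fun x => h (a + b - x))
    (fun x hx y hy hxy => hanti (hrefl.mapsTo hy) (hrefl.mapsTo hx) (by linarith))
    (hbij.comp hrefl)
  have hcont : ContinuousOn (fun x => e (a + b - x)) (Icc a b) := by fun_prop
  refine hcont.congr fun x hx => ?_
  simp [he (hrefl.mapsTo hx)]

theorem exists_lt_iterate_of_le_map {α : Type*} [ConditionallyCompleteLinearOrder α]
    [TopologicalSpace α] [OrderTopology α] {f : α → α} (hmono : Monotone f)
    (hcont : Continuous f) {x b : α} (hx : x ≤ f x) (hxb : x ≤ b) (hb : f b = b)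
    (hfix : ∀ y ∈ Ico x b, f y ≠ y) {y : α} (hy : y < b) : ∃ n, y < f^[n] x := by
  have hbdd : ∀ n, f^[n] x ≤ b := fun n => iterate_fixed hb n ▸ hmono.iterate n hxb
  have hlim := tendsto_atTop_ciSup (hmono.monotone_iterate_of_le_map hx)
    ⟨b, forall_mem_range.2 hbdd⟩
  have hsup : ⨆ n, f^[n] x = b := by
    refine (ciSup_le hbdd).eq_of_not_lt fun hlt => hfix _ ⟨?_, hlt⟩ ?_
    · exact le_ciSup_of_le ⟨b, forall_mem_range.2 hbdd⟩ 0 le_rfl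
    · exact isFixedPt_of_tendsto_iterate hlim hcont.continuousAt
  exact exists_lt_of_lt_ciSup (hsup ▸ hy)

theorem exists_orderIso_apply_eq {x₀ x₁ y₀ y₁ : ℝ} (hx : x₀ < x₁) (hy : y₀ < y₁) :
    ∃ A : ℝ ≃o ℝ, A x₀ = y₀ ∧ A x₁ = y₁ := by
  have hs : 0 < (y₁ - y₀) / (x₁ - x₀) := div_pos (sub_pos.2 hy) (sub_pos.2 hx)
  refine ⟨((OrderIso.addRight (-x₀)).trans (OrderIso.mulRight₀ _ hs)).trans
    (OrderIso.addRight y₀), ?_, ?_⟩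
  · simp
  · simp [← sub_eq_add_neg, mul_div_cancel₀ _ (sub_pos.2 hx).ne']

namespace OrderIso

variable (G : ℝ ≃o ℝ)

theorem iterate_eq_pow (k : ℕ) : (⇑G)^[k] = ⇑(G ^ k) := smul_iterate G k

theorem zpow_apply_eq_self {a : ℝ} (ha : G a = a) (n : ℤ) : (G ^ n) a = a :=
  zpow_mem (show G ∈ MulAction.stabilizer (ℝ ≃o ℝ) a from ha) n

theorem zpow_add_one_apply (n : ℤ) (x : ℝ) : (G ^ (n + 1)) x = G ((G ^ n) x) := by
  rw [add_comm, zpow_one_add]; rfl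

theorem zpow_add_one_apply' (n : ℤ) (x : ℝ) : (G ^ (n + 1)) x = (G ^ n) (G x) := by
  rw [zpow_add_one]; rfl

@[simp]
theorem zpow_neg_apply_zpow_apply (n : ℤ) (x : ℝ) : (G ^ (-n)) ((G ^ n) x) = x := by
  rw [zpow_neg]; exact RelIso.inv_apply_self _ x

@[simp]
theorem zpow_apply_zpow_neg_apply (n : ℤ) (x : ℝ) : (G ^ n) ((G ^ (-n)) x) = x := by
  rw [zpow_neg]; exact RelIso.apply_inv_self _ x

end OrderIso

structure PushesRight (G : ℝ ≃o ℝ) (a b : ℝ) : Prop where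
  apply_left : G a = a
  apply_right : G b = b
  lt_apply : ∀ x ∈ Ioo a b, x < G x

section FundamentalDomain

variable {G H A : ℝ ≃o ℝ} {a b c d x₀ y₀ : ℝ}

theorem PushesRight.zpow_apply_mem (hG : PushesRight G a b) {x : ℝ} (hx : x ∈ Ioo a b)
    (n : ℤ) : (G ^ n) x ∈ Ioo a b :=
  ⟨G.zpow_apply_eq_self hG.apply_left n ▸ (G ^ n).strictMono hx.1,
    G.zpow_apply_eq_self hG.apply_right n ▸ (G ^ n).strictMono hx.2⟩

theorem PushesRight.strictMono_orbit (hG : PushesRight G a b) (hx₀ : x₀ ∈ Ioo a b) :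
    StrictMono fun n : ℤ => (G ^ n) x₀ :=
  strictMono_int_of_lt_succ fun n => by
    simpa only [G.zpow_add_one_apply] using hG.lt_apply _ (hG.zpow_apply_mem hx₀ n)

/-- The orbit of `x₀` accumulates only at fixed points, that is, at `a` and `b`. -/
theorem PushesRight.exists_orbit_le_lt (hG : PushesRight G a b) (hx₀ : x₀ ∈ Ioo a b) {x : ℝ}
    (hx : x ∈ Ioo a b) : ∃ n : ℤ, (G ^ n) x₀ ≤ x ∧ x < (G ^ (n + 1)) x₀ := by
  obtain ⟨k, hk⟩ := exists_lt_iterate_of_le_map G.monotone G.continuous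
    (hG.lt_apply x₀ hx₀).le hx₀.2.le hG.apply_right
    (fun y hy => (hG.lt_apply y ⟨hx₀.1.trans_le hy.1, hy.2⟩).ne') hx.2
  -- the backward orbit, through the same lemma in the order dual
  obtain ⟨m, hm⟩ := exists_lt_iterate_of_le_map (α := ℝᵒᵈ) G.symm.monotone.dual
    G.symm.continuous (G.symm_apply_le.2 (hG.lt_apply x₀ hx₀).le) hx₀.1.le
    (G.symm_apply_eq.2 hG.apply_left.symm)
    (fun y hy => (G.symm_apply_lt.2
      (hG.lt_apply y ⟨hy.2, (show @LE.le ℝ _ y x₀ from hy.1).trans_lt hx₀.2⟩)).ne) hx.1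
  rw [G.iterate_eq_pow, ← zpow_natCast] at hk
  replace hm : (G ^ (-(m : ℤ))) x₀ < x := by
    rw [zpow_neg, zpow_natCast, ← inv_pow, ← OrderIso.iterate_eq_pow]; exact hm
  obtain ⟨n, hn, hmax⟩ := Int.exists_greatest_of_bdd (P := fun n => (G ^ n) x₀ ≤ x)
    ⟨k, fun n hn => ((hG.strictMono_orbit hx₀).lt_iff_lt.1 (hn.trans_lt hk)).le⟩ ⟨_, hm.le⟩
  exact ⟨n, hn, lt_of_not_ge fun h => (hmax _ h).not_gt (lt_add_one n)⟩

open Classical in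
noncomputable def orbitIndex (G : ℝ ≃o ℝ) (x₀ x : ℝ) : ℤ :=
  if h : ∃ n : ℤ, (G ^ n) x₀ ≤ x ∧ x < (G ^ (n + 1)) x₀ then h.choose else 0

theorem PushesRight.orbitIndex_spec (hG : PushesRight G a b) (hx₀ : x₀ ∈ Ioo a b) {x : ℝ}
    (hx : x ∈ Ioo a b) :
    (G ^ orbitIndex G x₀ x) x₀ ≤ x ∧ x < (G ^ (orbitIndex G x₀ x + 1)) x₀ := by
  have h := hG.exists_orbit_le_lt hx₀ hx
  rw [orbitIndex, dif_pos h]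
  exact h.choose_spec

theorem PushesRight.orbitIndex_eq (hG : PushesRight G a b) (hx₀ : x₀ ∈ Ioo a b) {x : ℝ}
    {n : ℤ} (h₁ : (G ^ n) x₀ ≤ x) (h₂ : x < (G ^ (n + 1)) x₀) : orbitIndex G x₀ x = n := by
  have hx : x ∈ Ioo a b :=
    ⟨(hG.zpow_apply_mem hx₀ n).1.trans_le h₁, h₂.trans (hG.zpow_apply_mem hx₀ _).2⟩
  obtain ⟨h₃, h₄⟩ := hG.orbitIndex_spec hx₀ hx
  have := (hG.strictMono_orbit hx₀).lt_iff_lt.1 (h₃.trans_lt h₂)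
  have := (hG.strictMono_orbit hx₀).lt_iff_lt.1 (h₁.trans_lt h₄)
  omega

/-- `A` on the fundamental domain `[x₀, G x₀)`, extended equivariantly. -/
noncomputable def fundDomainConj (G H A : ℝ ≃o ℝ) (x₀ x : ℝ) : ℝ :=
  (H ^ orbitIndex G x₀ x) (A ((G ^ (-orbitIndex G x₀ x)) x))

theorem PushesRight.fundDomainConj_mem (hG : PushesRight G a b) (hx₀ : x₀ ∈ Ioo a b)
    (hA₀ : A x₀ = y₀) (hA₁ : A (G x₀) = H y₀) {x : ℝ} (hx : x ∈ Ioo a b) :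
    (H ^ orbitIndex G x₀ x) y₀ ≤ fundDomainConj G H A x₀ x ∧
      fundDomainConj G H A x₀ x < (H ^ (orbitIndex G x₀ x + 1)) y₀ := by
  obtain ⟨h₁, h₂⟩ := hG.orbitIndex_spec hx₀ hx
  set n := orbitIndex G x₀ x
  have h₁' : x₀ ≤ (G ^ (-n)) x := by simpa using (G ^ (-n)).monotone h₁
  have h₂' : (G ^ (-n)) x < G x₀ := by
    simpa [G.zpow_add_one_apply'] using (G ^ (-n)).strictMono h₂
  constructor
  · have := (H ^ n).monotone (A.monotone h₁')
    rwa [hA₀] at this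
  · have := (H ^ n).strictMono (A.strictMono h₂')
    rwa [hA₁, ← H.zpow_add_one_apply'] at this

theorem PushesRight.fundDomainConj_apply (hG : PushesRight G a b) (hx₀ : x₀ ∈ Ioo a b) {x : ℝ}
    (hx : x ∈ Ioo a b) : fundDomainConj G H A x₀ (G x) = H (fundDomainConj G H A x₀ x) := by
  obtain ⟨h₁, h₂⟩ := hG.orbitIndex_spec hx₀ hx
  set n := orbitIndex G x₀ x
  have hn : orbitIndex G x₀ (G x) = n + 1 :=
    hG.orbitIndex_eq hx₀ (by simpa [G.zpow_add_one_apply] using G.monotone h₁)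
      (by simpa [G.zpow_add_one_apply] using G.strictMono h₂)
  have hshift : (G ^ (-(n + 1))) (G x) = (G ^ (-n)) x := by
    rw [← RelIso.mul_apply, ← zpow_add_one, neg_add, neg_add_cancel_right]
  rw [fundDomainConj, fundDomainConj, hn, hshift, H.zpow_add_one_apply]

theorem PushesRight.leftInvOn_fundDomainConj (hG : PushesRight G a b) (hH : PushesRight H c d)
    (hx₀ : x₀ ∈ Ioo a b) (hy₀ : y₀ ∈ Ioo c d) (hA₀ : A x₀ = y₀) (hA₁ : A (G x₀) = H y₀) :
    LeftInvOn (fundDomainConj H G A.symm y₀) (fundDomainConj G H A x₀) (Ioo a b) := by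
  intro x hx
  obtain ⟨h₁, h₂⟩ := hG.fundDomainConj_mem hx₀ hA₀ hA₁ hx
  rw [fundDomainConj, hH.orbitIndex_eq hy₀ h₁ h₂, fundDomainConj]
  simp

theorem PushesRight.strictMonoOn_fundDomainConj (hG : PushesRight G a b) (hH : PushesRight H c d)
    (hx₀ : x₀ ∈ Ioo a b) (hy₀ : y₀ ∈ Ioo c d) (hA₀ : A x₀ = y₀) (hA₁ : A (G x₀) = H y₀) :
    StrictMonoOn (fundDomainConj G H A x₀) (Ioo a b) := by
  intro x hx y hy hxy
  have hmx := hG.fundDomainConj_mem hx₀ hA₀ hA₁ hx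
  have hmy := hG.fundDomainConj_mem hx₀ hA₀ hA₁ hy
  have hnm : orbitIndex G x₀ x ≤ orbitIndex G x₀ y := by
    by_contra! h
    have := (hG.strictMono_orbit hx₀).monotone (Int.add_one_le_iff.2 h)
    exact ((hG.orbitIndex_spec hx₀ hy).2.trans_le this).not_ge
      ((hG.orbitIndex_spec hx₀ hx).1.trans hxy.le)
  rcases hnm.eq_or_lt with h | h
  · rw [fundDomainConj, fundDomainConj, h]
    exact (H ^ _).strictMono (A.strictMono ((G ^ _).strictMono hxy))
  · calc fundDomainConj G H A x₀ x < (H ^ (orbitIndex G x₀ x + 1)) y₀ := hmx.2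
      _ ≤ (H ^ orbitIndex G x₀ y) y₀ := (hH.strictMono_orbit hy₀).monotone h
      _ ≤ fundDomainConj G H A x₀ y := hmy.1

theorem PushesRight.mapsTo_fundDomainConj (hG : PushesRight G a b) (hH : PushesRight H c d)
    (hx₀ : x₀ ∈ Ioo a b) (hy₀ : y₀ ∈ Ioo c d) (hA₀ : A x₀ = y₀) (hA₁ : A (G x₀) = H y₀) :
    MapsTo (fundDomainConj G H A x₀) (Ioo a b) (Ioo c d) := fun _ hx =>
  have h := hG.fundDomainConj_mem hx₀ hA₀ hA₁ hx
  ⟨(hH.zpow_apply_mem hy₀ _).1.trans_le h.1, h.2.trans (hH.zpow_apply_mem hy₀ _).2⟩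

theorem PushesRight.exists_semiconj_Ioo (hG : PushesRight G a b) (hH : PushesRight H c d)
    (hab : a < b) (hcd : c < d) :
    ∃ φ : ℝ → ℝ, StrictMonoOn φ (Ioo a b) ∧ BijOn φ (Ioo a b) (Ioo c d) ∧
      ∀ x ∈ Ioo a b, φ (G x) = H (φ x) := by
  have hx₀ : (a + b) / 2 ∈ Ioo a b := ⟨by linarith, by linarith⟩
  have hy₀ : (c + d) / 2 ∈ Ioo c d := ⟨by linarith, by linarith⟩
  obtain ⟨A, hA₀, hA₁⟩ := exists_orderIso_apply_eq (hG.lt_apply _ hx₀) (hH.lt_apply _ hy₀)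
  have hA₀' := A.symm_apply_eq.2 hA₀.symm
  have hA₁' := A.symm_apply_eq.2 hA₁.symm
  have hinv : InvOn (fundDomainConj H G A.symm _) (fundDomainConj G H A _) (Ioo a b) (Ioo c d) :=
    ⟨hG.leftInvOn_fundDomainConj hH hx₀ hy₀ hA₀ hA₁,
      by simpa using hH.leftInvOn_fundDomainConj hG hy₀ hx₀ hA₀' hA₁'⟩
  exact ⟨_, hG.strictMonoOn_fundDomainConj hH hx₀ hy₀ hA₀ hA₁,
    hinv.bijOn (hG.mapsTo_fundDomainConj hH hx₀ hy₀ hA₀ hA₁)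
      (hH.mapsTo_fundDomainConj hG hy₀ hx₀ hA₀' hA₁'),
    fun x hx => hG.fundDomainConj_apply hx₀ hx⟩

theorem PushesRight.apply_mem (hG : PushesRight G a b) {x : ℝ} (hx : x ∈ Ioo a b) :
    G x ∈ Ioo a b := by
  simpa using hG.zpow_apply_mem hx 1

theorem PushesRight.exists_semiconj (hG : PushesRight G a b) (hH : PushesRight H c d)
    (hab : a < b) (hcd : c < d) :
    ∃ φ : ℝ → ℝ, StrictMonoOn φ (Icc a b) ∧ BijOn φ (Icc a b) (Icc c d) ∧
      ∀ x ∈ Icc a b, φ (G x) = H (φ x) := by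
  obtain ⟨φ, hmono, hbij, hconj⟩ := hG.exists_semiconj_Ioo hH hab hcd
  set ψ := update (update φ a c) b d
  have hψa : ψ a = c := by simp [ψ, hab.ne]
  have hψb : ψ b = d := by simp [ψ]
  have hψ : EqOn φ ψ (Ioo a b) := fun x hx => by simp [ψ, hx.1.ne', hx.2.ne]
  refine ⟨ψ, fun x hx y hy hxy => ?_, ?_, fun x hx => ?_⟩
  · rcases eq_left_or_mem_Ioo_of_mem_Ico ⟨hx.1, hxy.trans_le hy.2⟩ with rfl | hx' <;>
      rcases eq_right_or_mem_Ioo_of_mem_Ioc ⟨hx.1.trans_lt hxy, hy.2⟩ with rfl | hy'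
    · rwa [hψa, hψb]
    · rw [hψa, ← hψ hy']; exact (hbij.mapsTo hy').1
    · rw [hψb, ← hψ hx']; exact (hbij.mapsTo hx').2
    · rw [← hψ hx', ← hψ hy']; exact hmono hx' hy' hxy
  · have h := ((hbij.congr hψ).insert (a := a) (by simp [hψa])).insert (a := b)
      (by simp [hψb, hψa, hcd.ne'])
    rwa [hψa, hψb, Ioo_insert_left hab, Ioo_insert_left hcd, Ico_insert_right hab.le,
      Ico_insert_right hcd.le] at h
  · rcases eq_endpoints_or_mem_Ioo_of_mem_Icc hx with rfl | rfl | hx'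
    · rw [hG.apply_left, hψa, hH.apply_left]
    · rw [hG.apply_right, hψb, hH.apply_right]
    · rw [← hψ hx', ← hψ (hG.apply_mem hx'), hconj x hx']

end FundamentalDomain

def OrderIso.reflectSymm (e : ℝ ≃o ℝ) (s : ℝ) : ℝ ≃o ℝ where
  toFun x := s - e.symm (s - x)
  invFun x := s - e (s - x)
  left_inv x := by simp
  right_inv x := by simp
  map_rel_iff' {x y} := by
    simp only [Equiv.coe_fn_mk]
    rw [sub_le_sub_iff_left, e.symm.le_iff_le, sub_le_sub_iff_left]

theorem PushesRight.reflectSymm {e : ℝ ≃o ℝ} {c d : ℝ} (he : PushesRight e c d) :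
    PushesRight (e.reflectSymm (c + d)) c d where
  apply_left := by simp [OrderIso.reflectSymm, e.symm_apply_eq.2 he.apply_right.symm]
  apply_right := by simp [OrderIso.reflectSymm, e.symm_apply_eq.2 he.apply_left.symm]
  lt_apply y hy := by
    have := e.symm_apply_lt.2 (he.lt_apply (c + d - y) ⟨by linarith [hy.2], by linarith [hy.1]⟩)
    simp only [OrderIso.reflectSymm, RelIso.coe_fn_mk, Equiv.coe_fn_mk]
    linarith

structure IsReverser (e : ℝ ≃o ℝ) (h : ℝ → ℝ) (s t : Set ℝ) : Prop where
  strictAntiOn : StrictAntiOn h s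
  bijOn : BijOn h s t
  map_apply : ∀ x ∈ s, h (e x) = e.symm (h x)

namespace IsReverser

variable {e : ℝ ≃o ℝ} {h h' : ℝ → ℝ} {s t : Set ℝ} {a b c d m : ℝ}

theorem of_symm (hh : IsReverser e.symm h s t) (hs : MapsTo e s s) : IsReverser e h s t where
  strictAntiOn := hh.strictAntiOn
  bijOn := hh.bijOn
  map_apply x hx := (e.symm_apply_eq.2 (by simpa using hh.map_apply (e x) (hs hx))).symm

theorem congr (hh : IsReverser e h s t) (hs : MapsTo e s s) (heq : EqOn h h' s) :
    IsReverser e h' s t where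
  strictAntiOn := hh.strictAntiOn.congr heq
  bijOn := hh.bijOn.congr heq
  map_apply x hx := by rw [← heq hx, ← heq (hs hx), hh.map_apply x hx]

theorem apply_left_right (hh : IsReverser e h (Icc a b) (Icc c d)) (hab : a ≤ b) :
    h a = d ∧ h b = c := by
  have ha := hh.bijOn.mapsTo (left_mem_Icc.2 hab)
  have hb := hh.bijOn.mapsTo (right_mem_Icc.2 hab)
  obtain ⟨y, hy, rfl⟩ := hh.bijOn.surjOn (right_mem_Icc.2 (ha.1.trans ha.2))
  obtain ⟨z, hz, rfl⟩ := hh.bijOn.surjOn (left_mem_Icc.2 (ha.1.trans ha.2))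
  exact ⟨ha.2.antisymm (hh.strictAntiOn.antitoneOn (left_mem_Icc.2 hab) hy hy.1),
    (hh.strictAntiOn.antitoneOn hz (right_mem_Icc.2 hab) hz.2).antisymm hb.1⟩

theorem union {c' : ℝ} (h₁ : IsReverser e h (Icc a m) (Icc c' d))
    (h₂ : IsReverser e h (Icc m b) (Icc c c')) (ham : a ≤ m) (hmb : m ≤ b) :
    IsReverser e h (Icc a b) (Icc c d) := by
  have hc'd := h₁.bijOn.mapsTo (left_mem_Icc.2 ham)
  have hcc' := h₂.bijOn.mapsTo (left_mem_Icc.2 hmb)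
  have hanti : StrictAntiOn h (Icc a b) := by
    rw [← Icc_union_Icc_eq_Icc ham hmb]
    exact h₁.strictAntiOn.union h₂.strictAntiOn (isGreatest_Icc ham) (isLeast_Icc hmb)
  refine ⟨hanti, ?_, fun x hx => ?_⟩
  · have := h₁.bijOn.union h₂.bijOn (by rw [Icc_union_Icc_eq_Icc ham hmb]; exact hanti.injOn)
    rwa [Icc_union_Icc_eq_Icc ham hmb, union_comm,
      Icc_union_Icc_eq_Icc (hcc'.1.trans hcc'.2) (hc'd.1.trans hc'd.2)] at this
  · rcases le_total x m with hxm | hmx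
    · exact h₁.map_apply x ⟨hx.1, hxm⟩
    · exact h₂.map_apply x ⟨hmx, hx.2⟩

theorem piecewise {f g : ℝ → ℝ} {c' : ℝ} (h₁ : IsReverser e f (Icc a m) (Icc c' d))
    (h₂ : IsReverser e g (Icc m b) (Icc c c')) (hfg : f m = g m) (ha : e a = a) (hm : e m = m)
    (hb : e b = b) (ham : a ≤ m) (hmb : m ≤ b) :
    IsReverser e (fun x => if x ≤ m then f x else g x) (Icc a b) (Icc c d) := by
  refine (h₁.congr (mapsTo_Icc_of_apply_eq ha hm) fun x hx => (if_pos hx.2).symm).union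
    (h₂.congr (mapsTo_Icc_of_apply_eq hm hb) fun x hx => ?_) ham hmb
  rcases hx.1.eq_or_lt with rfl | hlt
  · simp [hfg]
  · simp [not_le.2 hlt]

theorem exists_glue {ψ₁ h₁ ψ₂ : ℝ → ℝ} {p q : ℝ} (hψ₁ : IsReverser e ψ₁ (Icc a p) (Icc q b))
    (hh₁ : IsReverser e h₁ (Icc p q) (Icc p q)) (hψ₂ : IsReverser e ψ₂ (Icc q b) (Icc a p))
    (ha : e a = a) (hp : e p = p) (hq : e q = q) (hb : e b = b) (hap : a ≤ p) (hpq : p ≤ q)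
    (hqb : q ≤ b) : ∃ h, IsReverser e h (Icc a b) (Icc a b) := by
  obtain ⟨hψ₁a, hψ₁p⟩ := hψ₁.apply_left_right hap
  obtain ⟨hh₁p, hh₁q⟩ := hh₁.apply_left_right hpq
  obtain ⟨hψ₂q, hψ₂b⟩ := hψ₂.apply_left_right hqb
  have hK := hh₁.piecewise hψ₂ (hh₁q.trans hψ₂q.symm) hp hq hb hpq hqb
  exact ⟨_, hψ₁.piecewise hK (by simp [hpq, hψ₁p, hh₁p]) ha hp hb hap (hpq.trans hqb)⟩

end IsReverser

theorem PushesRight.exists_isReverser {e : ℝ ≃o ℝ} {a b c d : ℝ} (he₁ : PushesRight e a b)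
    (he₂ : PushesRight e c d) (hab : a < b) (hcd : c < d) :
    ∃ h, IsReverser e h (Icc a b) (Icc c d) := by
  obtain ⟨φ, hmono, hbij, hconj⟩ := he₁.exists_semiconj he₂.reflectSymm hab hcd
  refine ⟨fun x => c + d - φ x, fun x hx y hy hxy => ?_, (bijOn_add_sub_Icc c d).comp hbij,
    fun x hx => ?_⟩
  · simpa using hmono hx hy hxy
  · simp [hconj x hx, OrderIso.reflectSymm]

structure IsFixedGap (e : ℝ ≃o ℝ) (a b : ℝ) : Prop where
  lt : a < b
  apply_left : e a = a
  apply_right : e b = b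
  apply_ne : ∀ x ∈ Ioo a b, e x ≠ x

section Gaps

variable {e : ℝ ≃o ℝ} {a b c d : ℝ}

theorem forall_lt_apply_or_forall_apply_lt (hne : ∀ x ∈ Ioo a b, e x ≠ x) :
    (∀ x ∈ Ioo a b, x < e x) ∨ ∀ x ∈ Ioo a b, e x < x := by
  by_contra! ⟨⟨x, hx, hxe⟩, ⟨y, hy, hye⟩⟩
  obtain ⟨z, hz, hz0⟩ := isPreconnected_Ioo.intermediate_value hx hy
    (e.continuous.sub continuous_id).continuousOn ⟨sub_nonpos.2 hxe, sub_nonneg.2 hye⟩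
  exact hne z hz (sub_eq_zero.1 hz0)

theorem IsFixedGap.pushesRight_or (hab : IsFixedGap e a b) :
    PushesRight e a b ∨ PushesRight e.symm a b := by
  refine (forall_lt_apply_or_forall_apply_lt hab.apply_ne).imp
    (fun h => ⟨hab.apply_left, hab.apply_right, h⟩) fun h => ⟨?_, ?_, ?_⟩
  · exact e.symm_apply_eq.2 hab.apply_left.symm
  · exact e.symm_apply_eq.2 hab.apply_right.symm
  · exact fun x hx => e.lt_symm_apply.2 (h x hx)

theorem IsFixedGap.exists_isReverser (hab : IsFixedGap e a b) (hcd : IsFixedGap e c d)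
    (hsign : (∀ x ∈ Ioo a b, x < e x) ↔ ∀ x ∈ Ioo c d, x < e x) :
    ∃ h, IsReverser e h (Icc a b) (Icc c d) := by
  rcases hab.pushesRight_or with hR | hL
  · exact hR.exists_isReverser ⟨hcd.apply_left, hcd.apply_right, hsign.1 hR.lt_apply⟩
      hab.lt hcd.lt
  · have hL' : PushesRight e.symm c d := hcd.pushesRight_or.resolve_left fun hR => by
      obtain ⟨x, hx⟩ := nonempty_Ioo.2 hab.lt
      exact (hsign.2 hR.lt_apply x hx).not_gt (e.lt_symm_apply.1 (hL.lt_apply x hx))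
    obtain ⟨h, hh⟩ := hL.exists_isReverser hL' hab.lt hcd.lt
    exact ⟨h, hh.of_symm (mapsTo_Icc_of_apply_eq hab.apply_left hab.apply_right)⟩

theorem eventually_nhdsGT_lt_apply_iff (hab : a < b) (hne : ∀ x ∈ Ioo a b, e x ≠ x) :
    (∀ᶠ x in 𝓝[>] a, x < e x) ↔ ∀ x ∈ Ioo a b, x < e x := by
  refine ⟨fun hev => (forall_lt_apply_or_forall_apply_lt hne).resolve_right fun hlt => ?_,
    fun h => eventually_of_mem (Ioo_mem_nhdsGT hab) h⟩
  obtain ⟨x, hx₁, hx₂⟩ := (hev.and (eventually_of_mem (Ioo_mem_nhdsGT hab) hlt)).exists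
  exact hx₁.not_gt hx₂

theorem eventually_nhdsLT_lt_apply_iff (hab : a < b) (hne : ∀ x ∈ Ioo a b, e x ≠ x) :
    (∀ᶠ x in 𝓝[<] b, x < e x) ↔ ∀ x ∈ Ioo a b, x < e x := by
  refine ⟨fun hev => (forall_lt_apply_or_forall_apply_lt hne).resolve_right fun hlt => ?_,
    fun h => eventually_of_mem (Ioo_mem_nhdsLT hab) h⟩
  obtain ⟨x, hx₁, hx₂⟩ := (hev.and (eventually_of_mem (Ioo_mem_nhdsLT hab) hlt)).exists
  exact hx₁.not_gt hx₂

end Gaps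

theorem TransverseFix.exists_isolated {f : ℝ → ℝ} {p : ℝ} (hp : TransverseFix f p) :
    ∃ η > 0, ∀ y ∈ Ioo (p - η) (p + η), f y = y → y = p := by
  rcases hp with ⟨-, η, hη, hconv⟩ | ⟨-, η, hη, hrep⟩
  · refine ⟨η, hη, fun y hy hfy => ?_⟩
    have hlim := hconv y hy
    simp only [iterate_fixed hfy] at hlim
    exact tendsto_nhds_unique tendsto_const_nhds hlim
  · refine ⟨η, hη, fun y hy hfy => by_contra fun hne => ?_⟩
    obtain ⟨n, hn⟩ := hrep y hy hne
    exact hn (by rwa [iterate_fixed hfy])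

theorem finite_of_transverseFix {f : ℝ → ℝ} {s : Set ℝ} (hs : IsCompact {x ∈ s | f x = x})
    (htrans : ∀ p ∈ s, f p = p → TransverseFix f p) : {x ∈ s | f x = x}.Finite := by
  refine hs.finite (isDiscrete_iff_forall_mem_exists_isOpen.2 fun p hp => ?_)
  obtain ⟨η, hη, hiso⟩ := (htrans p hp.1 hp.2).exists_isolated
  exact ⟨Ioo (p - η) (p + η), isOpen_Ioo, eq_singleton_iff_unique_mem.2
    ⟨⟨⟨by linarith, by linarith⟩, hp⟩, fun y hy => hiso y hy.1 hy.2.2⟩⟩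

theorem TransverseFix.of_eqOn {f g : ℝ → ℝ} {l r p : ℝ} (hfg : EqOn f g (Icc l r))
    (hf : MapsTo f (Icc l r) (Icc l r)) (hp : p ∈ Ioo l r) (htp : TransverseFix f p) :
    TransverseFix g p := by
  have hiter : ∀ n, ∀ x ∈ Icc l r, f^[n] x = g^[n] x := by
    intro n
    induction n with
    | zero => simp
    | succ n ih =>
      intro x hx
      rw [iterate_succ_apply, iterate_succ_apply, ← hfg hx]
      exact ih _ (hf hx)
  have hgp : f p = p → g p = p := fun h => (hfg (Ioo_subset_Icc_self hp)).symm.trans h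
  set δ := min (p - l) (r - p)
  have hsub {η : ℝ} : Ioo (p - min η δ) (p + min η δ) ⊆ Ioo (p - η) (p + η) ∩ Icc l r :=
    fun x hx => by
      have := min_le_left η δ
      have := min_le_right η δ
      have := min_le_left (p - l) (r - p)
      have := min_le_right (p - l) (r - p)
      exact ⟨⟨by linarith [hx.1], by linarith [hx.2]⟩, by linarith [hx.1], by linarith [hx.2]⟩
  have hδ : 0 < δ := lt_min (by linarith [hp.1]) (by linarith [hp.2])
  rcases htp with ⟨hfp, η, hη, hconv⟩ | ⟨hfp, η, hη, hrep⟩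
  · exact Or.inl ⟨hgp hfp, min η δ, lt_min hη hδ, fun x hx =>
      (hconv x (hsub hx).1).congr fun n => hiter n x (hsub hx).2⟩
  · refine Or.inr ⟨hgp hfp, min η δ, lt_min hη hδ, fun x hx hne => ?_⟩
    obtain ⟨n, hn⟩ := hrep x (hsub hx).1 hne
    exact ⟨n, fun hmem => hn (hiter n x (hsub hx).2 ▸ (hsub hmem).1)⟩

section TransverseFixedPoints

variable {e : ℝ ≃o ℝ} {p : ℝ}

theorem eventually_mem_Ioo_nhdsGT {η : ℝ} (hη : 0 < η) :
    ∀ᶠ x in 𝓝[>] p, x ∈ Ioo (p - η) (p + η) ∧ p < x :=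
  have h : Ioo (p - η) (p + η) ∈ 𝓝 p := Ioo_mem_nhds (by linarith) (by linarith)
  (eventually_nhdsWithin_of_eventually_nhds h).and self_mem_nhdsWithin

theorem eventually_mem_Ioo_nhdsLT {η : ℝ} (hη : 0 < η) :
    ∀ᶠ x in 𝓝[<] p, x ∈ Ioo (p - η) (p + η) ∧ x < p :=
  have h : Ioo (p - η) (p + η) ∈ 𝓝 p := Ioo_mem_nhds (by linarith) (by linarith)
  (eventually_nhdsWithin_of_eventually_nhds h).and self_mem_nhdsWithin

theorem AttractingFix.not_eventually_lt_apply_nhdsGT (hp : AttractingFix e p) :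
    ¬ ∀ᶠ x in 𝓝[>] p, x < e x := fun hev => by
  obtain ⟨-, η, hη, hconv⟩ := hp
  obtain ⟨x, ⟨hxη, hpx⟩, hx⟩ := ((eventually_mem_Ioo_nhdsGT hη).and hev).exists
  exact hpx.not_ge (ge_of_tendsto (hconv x hxη) (.of_forall fun n =>
    e.monotone.monotone_iterate_of_le_map hx.le n.zero_le))

theorem AttractingFix.not_eventually_apply_lt_nhdsLT (hp : AttractingFix e p) :
    ¬ ∀ᶠ x in 𝓝[<] p, e x < x := fun hev => by
  obtain ⟨-, η, hη, hconv⟩ := hp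
  obtain ⟨x, ⟨hxη, hxp⟩, hx⟩ := ((eventually_mem_Ioo_nhdsLT hη).and hev).exists
  exact hxp.not_ge (le_of_tendsto (hconv x hxη) (.of_forall fun n =>
    e.monotone.antitone_iterate_of_map_le hx.le n.zero_le))

theorem RepellingFix.not_eventually_lt_apply_nhdsLT (hp : RepellingFix e p) :
    ¬ ∀ᶠ x in 𝓝[<] p, x < e x := fun hev => by
  obtain ⟨hfix, η, hη, hrep⟩ := hp
  obtain ⟨x, ⟨hxη, hxp⟩, hx⟩ := ((eventually_mem_Ioo_nhdsLT hη).and hev).exists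
  obtain ⟨n, hn⟩ := hrep x hxη hxp.ne
  have h₁ : x ≤ e^[n] x := e.monotone.monotone_iterate_of_le_map hx.le n.zero_le
  have h₂ : e^[n] x < p := iterate_fixed hfix n ▸ e.strictMono.iterate n hxp
  exact hn ⟨hxη.1.trans_le h₁, h₂.trans (by linarith)⟩

theorem RepellingFix.not_eventually_apply_lt_nhdsGT (hp : RepellingFix e p) :
    ¬ ∀ᶠ x in 𝓝[>] p, e x < x := fun hev => by
  obtain ⟨hfix, η, hη, hrep⟩ := hp
  obtain ⟨x, ⟨hxη, hpx⟩, hx⟩ := ((eventually_mem_Ioo_nhdsGT hη).and hev).exists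
  obtain ⟨n, hn⟩ := hrep x hxη hpx.ne'
  have h₁ : e^[n] x ≤ x := e.monotone.antitone_iterate_of_map_le hx.le n.zero_le
  have h₂ : p < e^[n] x := iterate_fixed hfix n ▸ e.strictMono.iterate n hpx
  exact hn ⟨by linarith, h₁.trans_lt hxη.2⟩

theorem TransverseFix.eventually_nhdsLT (hp : TransverseFix e p) :
    (∀ᶠ x in 𝓝[<] p, x < e x) ∨ ∀ᶠ x in 𝓝[<] p, e x < x := by
  obtain ⟨η, hη, hiso⟩ := hp.exists_isolated
  have hne : ∀ x ∈ Ioo (p - η) p, e x ≠ x := fun x hx hfx =>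
    hx.2.ne (hiso x ⟨hx.1, by linarith [hx.2]⟩ hfx)
  exact (forall_lt_apply_or_forall_apply_lt hne).imp
    (eventually_of_mem (Ioo_mem_nhdsLT (by linarith)))
    (eventually_of_mem (Ioo_mem_nhdsLT (by linarith)))

theorem TransverseFix.eventually_nhdsGT (hp : TransverseFix e p) :
    (∀ᶠ x in 𝓝[>] p, x < e x) ∨ ∀ᶠ x in 𝓝[>] p, e x < x := by
  obtain ⟨η, hη, hiso⟩ := hp.exists_isolated
  have hne : ∀ x ∈ Ioo p (p + η), e x ≠ x := fun x hx hfx =>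
    hx.1.ne' (hiso x ⟨by linarith [hx.1], hx.2⟩ hfx)
  exact (forall_lt_apply_or_forall_apply_lt hne).imp
    (eventually_of_mem (Ioo_mem_nhdsGT (by linarith)))
    (eventually_of_mem (Ioo_mem_nhdsGT (by linarith)))

theorem TransverseFix.eventually_lt_apply_nhdsLT_iff (hp : TransverseFix e p) :
    (∀ᶠ x in 𝓝[<] p, x < e x) ↔ ¬ ∀ᶠ x in 𝓝[>] p, x < e x := by
  rcases id hp with hA | hR
  · exact iff_of_true (hp.eventually_nhdsLT.resolve_right hA.not_eventually_apply_lt_nhdsLT)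
      hA.not_eventually_lt_apply_nhdsGT
  · exact iff_of_false hR.not_eventually_lt_apply_nhdsLT
      (not_not.2 (hp.eventually_nhdsGT.resolve_right hR.not_eventually_apply_lt_nhdsGT))

end TransverseFixedPoints

namespace IsReverser

variable {e : ℝ ≃o ℝ} {h : ℝ → ℝ} {s t : Set ℝ} {p q : ℝ}

theorem lt_apply_iff (hh : IsReverser e h s t) (hs : MapsTo e s s) {x : ℝ} (hx : x ∈ s) :
    h x < e (h x) ↔ x < e x :=
  calc h x < e (h x) ↔ e.symm (h x) < h x := e.symm_apply_lt.symm
    _ ↔ h (e x) < h x := by rw [hh.map_apply x hx]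
    _ ↔ x < e x := hh.strictAntiOn.lt_iff_gt (hs hx) hx

theorem eventually_lt_apply_iff (hh : IsReverser e h (Icc p q) (Icc p q)) (hpq : p < q)
    (hp : e p = p) (hq : e q = q) :
    (∀ᶠ x in 𝓝[>] p, x < e x) ↔ ∀ᶠ x in 𝓝[<] q, x < e x := by
  have hcont := hh.strictAntiOn.continuousOn_of_bijOn hh.bijOn
  obtain ⟨hhp, hhq⟩ := hh.apply_left_right hpq.le
  have hs := mapsTo_Icc_of_apply_eq hp hq
  have hpI := left_mem_Icc.2 hpq.le
  have hqI := right_mem_Icc.2 hpq.le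
  have hq' : Tendsto h (𝓝[<] q) (𝓝[>] p) := by
    have := ((hcont q hqI).mono Ico_subset_Icc_self).tendsto_nhdsWithin (t := Ioi p)
      fun x hx => hhq ▸ hh.strictAntiOn (Ico_subset_Icc_self hx) hqI hx.2
    rwa [nhdsWithin_Ico_eq_nhdsLT hpq, hhq] at this
  have hp' : Tendsto h (𝓝[>] p) (𝓝[<] q) := by
    have := ((hcont p hpI).mono Ioc_subset_Icc_self).tendsto_nhdsWithin (t := Iio q)
      fun x hx => hhp ▸ hh.strictAntiOn hpI (Ioc_subset_Icc_self hx) hx.1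
    rwa [nhdsWithin_Ioc_eq_nhdsGT hpq, hhp] at this
  constructor
  · intro hev
    filter_upwards [hq'.eventually hev, Ioo_mem_nhdsLT hpq] with x hx hxI
    exact (hh.lt_apply_iff hs (Ioo_subset_Icc_self hxI)).1 hx
  · intro hev
    filter_upwards [hp'.eventually hev, Ioo_mem_nhdsGT hpq] with x hx hxI
    exact (hh.lt_apply_iff hs (Ioo_subset_Icc_self hxI)).1 hx

end IsReverser

theorem ncard_sep_Icc {f : ℝ → ℝ} {a b : ℝ} (hab : a < b) (ha : f a = a) (hb : f b = b)
    (hfin : {x ∈ Ioo a b | f x = x}.Finite) :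
    {x ∈ Icc a b | f x = x}.ncard = {x ∈ Ioo a b | f x = x}.ncard + 2 := by
  set S := {x ∈ Ioo a b | f x = x}
  have hS : {x ∈ Icc a b | f x = x} = insert a (insert b S) := by
    ext x
    simp only [mem_ofPred_eq, mem_insert_iff, S]
    constructor
    · rintro ⟨hx, hfx⟩
      rcases eq_endpoints_or_mem_Ioo_of_mem_Icc hx with h | h | h
      exacts [Or.inl h, Or.inr (Or.inl h), Or.inr (Or.inr ⟨h, hfx⟩)]
    · rintro (rfl | rfl | ⟨hx, hfx⟩)
      exacts [⟨left_mem_Icc.2 hab.le, ha⟩, ⟨right_mem_Icc.2 hab.le, hb⟩,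
        ⟨Ioo_subset_Icc_self hx, hfx⟩]
  have ha' : a ∉ insert b S := by
    rintro (h | h)
    exacts [hab.ne h, h.1.1.ne rfl]
  rw [hS, ncard_insert_of_notMem ha' (hfin.insert b),
    ncard_insert_of_notMem (fun h => h.1.2.ne rfl) hfin]

theorem IsFixedGap.induction (e : ℝ ≃o ℝ) {P : ℝ → ℝ → Prop}
    (gap : ∀ a b, IsFixedGap e a b → P a b)
    (peel : ∀ a p q b, IsFixedGap e a p → p < q → IsFixedGap e q b → P p q → P a b)
    {a b : ℝ} (hab : a < b) (ha : e a = a) (hb : e b = b)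
    (hfin : {x ∈ Icc a b | e x = x}.Finite) (heven : Even {x ∈ Icc a b | e x = x}.ncard) :
    P a b := by
  obtain ⟨k, hk⟩ : ∃ k, {x ∈ Icc a b | e x = x}.ncard = k := ⟨_, rfl⟩
  induction k using Nat.strong_induction_on generalizing a b with
  | _ k ih =>
  set S := {x ∈ Ioo a b | e x = x}
  rcases S.eq_empty_or_nonempty with hS | hS
  · exact gap a b ⟨hab, ha, hb, fun x hx hfx => hS.subset ⟨hx, hfx⟩⟩
  have hSfin : S.Finite := hfin.subset fun x hx => ⟨Ioo_subset_Icc_self hx.1, hx.2⟩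
  obtain ⟨p, hpS, hp⟩ := S.exists_min_image id hSfin hS
  obtain ⟨q, hqS, hq⟩ := S.exists_max_image id hSfin hS
  have hS_eq : {x ∈ Icc p q | e x = x} = S := by
    ext x
    exact ⟨fun hx => ⟨⟨hpS.1.1.trans_le hx.1.1, hx.1.2.trans_lt hqS.1.2⟩, hx.2⟩,
      fun hx => ⟨⟨hp x hx, hq x hx⟩, hx.2⟩⟩
  have hcard : k = S.ncard + 2 := hk ▸ ncard_sep_Icc hab ha hb hSfin
  obtain ⟨j, hj⟩ := heven
  have hpq : p < q := by
    by_contra! hqp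
    have hsub : S ⊆ {p} := fun x hx => ((hp x hx).antisymm ((hq x hx).trans hqp)).symm
    have h₁ := ncard_le_ncard hsub
    have h₂ := (ncard_pos hSfin).2 hS
    rw [ncard_singleton] at h₁
    omega
  refine peel a p q b ⟨hpS.1.1, ha, hpS.2, fun x hx hfx => ?_⟩ hpq
    ⟨hqS.1.2, hqS.2, hb, fun x hx hfx => ?_⟩
    (ih S.ncard (by omega) hpq hpS.2 hqS.2 (hS_eq ▸ hSfin) ?_ (by rw [hS_eq]))
  · exact (hp x ⟨⟨hx.1, hx.2.trans hpS.1.2⟩, hfx⟩).not_gt hx.2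
  · exact (hq x ⟨⟨hqS.1.1.trans hx.1, hx.2⟩, hfx⟩).not_gt hx.1
  · rw [hS_eq]
    exact ⟨j - 1, by omega⟩

theorem exists_isReverser_of_even (e : ℝ ≃o ℝ) {a b : ℝ} (hab : a < b) (ha : e a = a)
    (hb : e b = b) (hfin : {x ∈ Icc a b | e x = x}.Finite)
    (heven : Even {x ∈ Icc a b | e x = x}.ncard)
    (htrans : ∀ p ∈ Ioo a b, e p = p → TransverseFix e p) :
    ∃ h, IsReverser e h (Icc a b) (Icc a b) := by
  refine IsFixedGap.induction e (P := fun a b => (∀ p ∈ Ioo a b, e p = p → TransverseFix e p) →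
    ∃ h, IsReverser e h (Icc a b) (Icc a b)) (fun a b hab _ => hab.exists_isReverser hab Iff.rfl)
    ?_ hab ha hb hfin heven htrans
  intro a p q b hap hpq hqb ih htrans
  have htp := htrans p ⟨hap.lt, hpq.trans hqb.lt⟩ hap.apply_right
  have htq := htrans q ⟨hap.lt.trans hpq, hqb.lt⟩ hqb.apply_left
  obtain ⟨h₁, hh₁⟩ := ih fun x hx => htrans x ⟨hap.lt.trans hx.1, hx.2.trans hqb.lt⟩
  have hsign : (∀ x ∈ Ioo a p, x < e x) ↔ ∀ x ∈ Ioo q b, x < e x := by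
    rw [← eventually_nhdsLT_lt_apply_iff hap.lt hap.apply_ne,
      ← eventually_nhdsGT_lt_apply_iff hqb.lt hqb.apply_ne, htp.eventually_lt_apply_nhdsLT_iff,
      hh₁.eventually_lt_apply_iff hpq hap.apply_right hqb.apply_left,
      htq.eventually_lt_apply_nhdsLT_iff, not_not]
  obtain ⟨ψ₁, hψ₁⟩ := hap.exists_isReverser hqb hsign
  obtain ⟨ψ₂, hψ₂⟩ := hqb.exists_isReverser hap hsign.symm
  exact hψ₁.exists_glue hh₁ hψ₂ hap.apply_left hap.apply_right hqb.apply_left hqb.apply_right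
    hap.lt.le hpq.le hqb.lt.le

theorem stmt_10_general
    (f f' : ℝ → ℝ) (l r : ℝ) (hlr : l < r)
    (hfm : StrictMonoOn f (Icc l r))
    (hfB : BijOn f (Icc l r) (Icc l r))
    (hinv : InvOn f' f (Icc l r) (Icc l r))
    (htrans : ∀ p ∈ Icc l r, f p = p → TransverseFix f p)
    (heven : Even {p ∈ Icc l r | f p = p}.ncard) :
    ∃ h : ℝ → ℝ, ContinuousOn h (Icc l r) ∧ BijOn h (Icc l r) (Icc l r) ∧
      ∀ x ∈ Icc l r, f' (h x) = h (f x) := by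
  obtain ⟨e, hef⟩ := exists_orderIso_eqOn hfm hfB
  have hfix : {p ∈ Icc l r | e p = p} = {p ∈ Icc l r | f p = p} := by
    ext p
    exact and_congr_right fun hp => by rw [hef hp]
  obtain ⟨hl, hr⟩ : e l = l ∧ e r = r := by
    rw [← Icc_eq_Icc_iff (e.monotone hlr.le), ← e.image_Icc, hef.image_eq, hfB.image_eq]
  have hcompact : IsCompact {p ∈ Icc l r | e p = p} :=
    isCompact_Icc.of_isClosed_subset (isClosed_Icc.inter (isClosed_eq e.continuous continuous_id))
      fun _ hx => hx.1
  have hfin := finite_of_transverseFix (hfix ▸ hcompact) htrans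
  have htrans' : ∀ p ∈ Ioo l r, e p = p → TransverseFix e p := fun p hp hep =>
    (htrans p (Ioo_subset_Icc_self hp) (hef (Ioo_subset_Icc_self hp) ▸ hep)).of_eqOn hef.symm
      hfB.mapsTo hp
  obtain ⟨h, hh⟩ := exists_isReverser_of_even e hlr hl hr (hfix ▸ hfin) (hfix ▸ heven) htrans'
  refine ⟨h, hh.strictAntiOn.continuousOn_of_bijOn hh.bijOn, hh.bijOn, fun x hx => ?_⟩
  have hy := hh.bijOn.mapsTo hx
  have hf'y := (hfB.symm hinv.symm).mapsTo hy
  rw [← hef hx, hh.map_apply x hx, eq_comm, e.symm_apply_eq, hef hf'y, hinv.2 hy]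

/-- an increasing homeomorphism of a compact interval with an even
number of transverse fixed points is topologically conjugate to its inverse. -/
theorem stmt_10
    (f f' : ℝ → ℝ) (l r : ℝ) (hlr : l < r)
    (hfc : ContinuousOn f (Icc l r)) (hfm : StrictMonoOn f (Icc l r))
    (hfB : BijOn f (Icc l r) (Icc l r))
    (hinv : InvOn f' f (Icc l r) (Icc l r))
    (htrans : ∀ p ∈ Icc l r, f p = p → TransverseFix f p)
    (heven : Even {p ∈ Icc l r | f p = p}.ncard) :
    ∃ h : ℝ → ℝ, ContinuousOn h (Icc l r) ∧ BijOn h (Icc l r) (Icc l r) ∧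
      ∀ x ∈ Icc l r, f' (h x) = h (f x) :=
  stmt_10_general f f' l r hlr hfm hfB hinv htrans heven
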